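/- arXiv:1207.7173 — 11 statements merged into one kernel-verified Lean document; each statement's English description precedes it below -/
import Mathlib

section
/- Let H be a real Hilbert space, S, A : H →L[ℝ] H bounded linear operators with S self-adjoint and positive semidefinite and A skew-adjoint, and f ∈ H. For λ > 0 suppose u_λ ∈ H satisfies (λ·I + S − A) u_λ = f. Then for all λ, λ' > 0: (λ + λ')⟨u_λ, u_{λ'}⟩ = ⟨S(u_λ − u_{λ'}), u_λ − u_{λ'}⟩ + λ‖u_λ‖² + λ'‖u_{λ'}‖². -/
open RealInnerProductSpace

theorem stmt_1
    {H : Type*} [NormedAddCommGroup H] [InnerProductSpace ℝ H] [CompleteSpace H]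
    (S A : H →L[ℝ] H)
    (hS_sa : ∀ x y : H, ⟪S x, y⟫ = ⟪x, S y⟫)
    (hS_pos : ∀ x : H, 0 ≤ ⟪S x, x⟫)
    (hA_skew : ∀ x y : H, ⟪A x, y⟫ = -⟪x, A y⟫)
    (f : H) (u : ℝ → H)
    (hu : ∀ l : ℝ, 0 < l → l • u l + S (u l) - A (u l) = f) :
    ∀ l l' : ℝ, 0 < l → 0 < l' →
      (l + l') * ⟪u l, u l'⟫ =
        ⟪S (u l - u l'), u l - u l'⟫ + l * ‖u l‖ ^ 2 + l' * ‖u l'‖ ^ 2 := by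
  intro l l' hl hl'
  set a := u l
  set b := u l'
  have h1 := hu l hl
  have h2 := hu l' hl'
  have e1 : ⟪l • a + S a - A a, b⟫ = ⟪f, b⟫ := by rw [h1]
  have e2 : ⟪a, l' • b + S b - A b⟫ = ⟪a, f⟫ := by rw [h2]
  have e3 : ⟪l • a + S a - A a, a⟫ = ⟪f, a⟫ := by rw [h1]
  have e4 : ⟪l' • b + S b - A b, b⟫ = ⟪f, b⟫ := by rw [h2]
  simp only [inner_sub_left, inner_add_left, inner_sub_right, inner_add_right,
    real_inner_smul_left, real_inner_smul_right, map_sub] at e1 e2 e3 e4 ⊢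
  have hAa : ⟪A a, a⟫ = 0 := by
    have h := hA_skew a a
    have h2 : ⟪a, A a⟫ = ⟪A a, a⟫ := real_inner_comm _ _
    linarith
  have hAb : ⟪A b, b⟫ = 0 := by
    have h := hA_skew b b
    have h2 : ⟪b, A b⟫ = ⟪A b, b⟫ := real_inner_comm _ _
    linarith
  have hAab := hA_skew a b
  have hSab := hS_sa a b
  have hSba : ⟪S b, a⟫ = ⟪a, S b⟫ := real_inner_comm _ _
  have hfa : ⟪a, f⟫ = ⟪f, a⟫ := real_inner_comm _ _
  have hna : ⟪a, a⟫ = ‖a‖ ^ 2 := real_inner_self_eq_norm_sq a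
  have hnb : ⟪b, b⟫ = ‖b‖ ^ 2 := real_inner_self_eq_norm_sq b
  have hcomm : ⟪b, a⟫ = ⟪a, b⟫ := real_inner_comm _ _
  nlinarith [e1, e2, e3, e4]
end

section
/- Let H be a real Hilbert space and u, g : (0, ∞) → H functions satisfying, for all λ, λ' > 0, the identity (λ + λ')⟨u(λ), u(λ')⟩ = ‖g(λ) − g(λ')‖² + λ‖u(λ)‖² + λ'‖u(λ')‖². Then for all 0 < λ' ≤ λ: 2‖g(λ) − g(λ')‖² ≤ (λ − λ')(‖u(λ')‖² − ‖u(λ)‖²), and this quantity is in turn at most λ‖u(λ')‖² + λ'‖u(λ)‖². -/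
open RealInnerProductSpace

theorem stmt_2
    {H : Type*} [NormedAddCommGroup H] [InnerProductSpace ℝ H] [CompleteSpace H]
    (u g : ℝ → H)
    (hid : ∀ l l' : ℝ, 0 < l → 0 < l' →
      (l + l') * ⟪u l, u l'⟫ =
        ‖g l - g l'‖ ^ 2 + l * ‖u l‖ ^ 2 + l' * ‖u l'‖ ^ 2) :
    ∀ l l' : ℝ, 0 < l' → l' ≤ l →
      2 * ‖g l - g l'‖ ^ 2 ≤ (l - l') * (‖u l'‖ ^ 2 - ‖u l‖ ^ 2) ∧
      (l - l') * (‖u l'‖ ^ 2 - ‖u l‖ ^ 2) ≤ l * ‖u l'‖ ^ 2 + l' * ‖u l‖ ^ 2 := by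
  intro l l' hl' hle
  have hl : 0 < l := lt_of_lt_of_le hl' hle
  have h := hid l l' hl hl'
  have cs := real_inner_le_norm (u l) (u l')
  constructor
  · nlinarith [sq_nonneg (‖u l‖ - ‖u l'‖), mul_pos hl hl', sq_nonneg (‖u l‖ + ‖u l'‖)]
  · nlinarith [mul_nonneg hl.le (sq_nonneg ‖u l‖), mul_nonneg hl'.le (sq_nonneg ‖u l'‖)]
end

section
/- Let H be a real Hilbert space and u, g : (0, ∞) → H functions satisfying, for all λ, λ' > 0, the identity (λ + λ')⟨u(λ), u(λ')⟩ = ‖g(λ) − g(λ')‖² + λ‖u(λ)‖² + λ'‖u(λ')‖². Then the function λ ↦ ‖u(λ)‖ is monotone decreasing on (0, ∞), i.e. for all 0 < λ' ≤ λ one has ‖u(λ)‖ ≤ ‖u(λ')‖. -/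
/-! If `‖u λ‖ > ‖u λ'‖` for some `λ ≥ λ'`, then dropping the nonnegative term `‖g λ - g λ'‖²`
and applying Cauchy–Schwarz gives `λ a² + λ' b² ≤ (λ + λ') a b` for `a = ‖u λ‖ > b = ‖u λ'‖`,
i.e. `(λ a - λ' b)(a - b) ≤ 0`, although both factors are positive. -/

open RealInnerProductSpace

lemma le_of_mul_sq_add_mul_sq_le {a b l l' : ℝ} (hb : 0 ≤ b) (hl' : 0 < l') (hle : l' ≤ l)
    (h : l * a ^ 2 + l' * b ^ 2 ≤ (l + l') * (a * b)) : a ≤ b := by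
  by_contra! hab
  have hfactor : 0 < l * a - l' * b := by nlinarith
  nlinarith [mul_pos hfactor (sub_pos.mpr hab)]

lemma norm_le_norm_of_mul_norm_sq_add_le_inner {H : Type*} [NormedAddCommGroup H]
    [InnerProductSpace ℝ H] {x y : H} {l l' : ℝ} (hl' : 0 < l') (hle : l' ≤ l)
    (h : l * ‖x‖ ^ 2 + l' * ‖y‖ ^ 2 ≤ (l + l') * ⟪x, y⟫) : ‖x‖ ≤ ‖y‖ := by
  refine le_of_mul_sq_add_mul_sq_le (norm_nonneg y) hl' hle (h.trans ?_)
  exact mul_le_mul_of_nonneg_left (real_inner_le_norm x y) (by linarith)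

theorem stmt_3_general
    {H : Type*} [NormedAddCommGroup H] [InnerProductSpace ℝ H]
    (u g : ℝ → H)
    (hid : ∀ l l' : ℝ, 0 < l → 0 < l' →
      (l + l') * ⟪u l, u l'⟫ =
        ‖g l - g l'‖ ^ 2 + l * ‖u l‖ ^ 2 + l' * ‖u l'‖ ^ 2) :
    ∀ l l' : ℝ, 0 < l' → l' ≤ l → ‖u l‖ ≤ ‖u l'‖ := by
  intro l l' hl' hle
  refine norm_le_norm_of_mul_norm_sq_add_le_inner hl' hle ?_
  rw [hid l l' (hl'.trans_le hle) hl']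
  linarith [sq_nonneg ‖g l - g l'‖]

theorem stmt_3
    {H : Type*} [NormedAddCommGroup H] [InnerProductSpace ℝ H] [CompleteSpace H]
    (u g : ℝ → H)
    (hid : ∀ l l' : ℝ, 0 < l → 0 < l' →
      (l + l') * ⟪u l, u l'⟫ =
        ‖g l - g l'‖ ^ 2 + l * ‖u l‖ ^ 2 + l' * ‖u l'‖ ^ 2) :
    ∀ l l' : ℝ, 0 < l' → l' ≤ l → ‖u l‖ ≤ ‖u l'‖ :=
  stmt_3_general u g hid
end

section
/- Let H be a real Hilbert space and u, g : (0, ∞) → H functions satisfying, for all λ, λ' > 0, the identity (λ + λ')⟨u(λ), u(λ')⟩ = ‖g(λ) − g(λ')‖² + λ‖u(λ)‖² + λ'‖u(λ')‖². Then for all 0 < a ≤ λ ≤ b one has √λ · ‖u(λ)‖ ≤ √b · ‖u(a)‖. -/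
open RealInnerProductSpace

theorem stmt_4
    {H : Type*} [NormedAddCommGroup H] [InnerProductSpace ℝ H] [CompleteSpace H]
    (u g : ℝ → H)
    (hid : ∀ l l' : ℝ, 0 < l → 0 < l' →
      (l + l') * ⟪u l, u l'⟫ =
        ‖g l - g l'‖ ^ 2 + l * ‖u l‖ ^ 2 + l' * ‖u l'‖ ^ 2) :
    ∀ a l b : ℝ, 0 < a → a ≤ l → l ≤ b →
      Real.sqrt l * ‖u l‖ ≤ Real.sqrt b * ‖u a‖ := by
  intro a l b ha hal hlb
  have hl : 0 < l := ha.trans_le hal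
  have key := hid l a hl ha
  have hcs : ⟪u l, u a⟫ ≤ ‖u l‖ * ‖u a‖ := real_inner_le_norm _ _
  have hg : (0:ℝ) ≤ ‖g l - g a‖ ^ 2 := sq_nonneg _
  have hx : (0:ℝ) ≤ ‖u l‖ := norm_nonneg _
  have hy : (0:ℝ) ≤ ‖u a‖ := norm_nonneg _
  have hcs' : (l + a) * ⟪u l, u a⟫ ≤ (l + a) * (‖u l‖ * ‖u a‖) :=
    mul_le_mul_of_nonneg_left hcs (by positivity)
  have hle : ‖u l‖ ≤ ‖u a‖ := by
    by_contra hxy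
    push_neg at hxy
    have h1 : 0 < l * ‖u l‖ - a * ‖u a‖ := by nlinarith
    nlinarith [mul_pos h1 (sub_pos.2 hxy)]
  have hs : Real.sqrt l ≤ Real.sqrt b := Real.sqrt_le_sqrt hlb
  exact mul_le_mul hs hle hx (Real.sqrt_nonneg b)
end

section
/- Let H be a real Hilbert space and u, g : (0, ∞) → H functions satisfying, for all λ, λ' > 0, the identity (λ + λ')⟨u(λ), u(λ')⟩ = ‖g(λ) − g(λ')‖² + λ‖u(λ)‖² + λ'‖u(λ')‖². Then for all 0 < a ≤ b one has ‖g(a) − g(b)‖ ≤ √b · ‖u(a)‖. -/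
open RealInnerProductSpace

theorem stmt_5
    {H : Type*} [NormedAddCommGroup H] [InnerProductSpace ℝ H] [CompleteSpace H]
    (u g : ℝ → H)
    (hid : ∀ l l' : ℝ, 0 < l → 0 < l' →
      (l + l') * ⟪u l, u l'⟫ =
        ‖g l - g l'‖ ^ 2 + l * ‖u l‖ ^ 2 + l' * ‖u l'‖ ^ 2) :
    ∀ a b : ℝ, 0 < a → a ≤ b → ‖g a - g b‖ ≤ Real.sqrt b * ‖u a‖ := by
  intro a b ha hab
  have hb : 0 < b := lt_of_lt_of_le ha hab
  have h := hid a b ha hb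
  have hcs : ⟪u a, u b⟫ ≤ ‖u a‖ * ‖u b‖ := real_inner_le_norm _ _
  have hkey : ‖g a - g b‖ ^ 2 ≤ b * ‖u a‖ ^ 2 := by
    nlinarith [sq_nonneg (2 * b * ‖u b‖ - (a + b) * ‖u a‖), norm_nonneg (u a),
      norm_nonneg (u b), sq_nonneg (‖u a‖ - ‖u b‖), mul_pos ha hb]
  have h2 : Real.sqrt b * ‖u a‖ = Real.sqrt (b * ‖u a‖ ^ 2) := by
    rw [Real.sqrt_mul hb.le, Real.sqrt_sq (norm_nonneg _)]
  rw [h2]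
  exact (Real.le_sqrt (norm_nonneg _) (by positivity)).mpr hkey
end

section
/- Let H be a real Hilbert space and u, g : (0, ∞) → H functions satisfying, for all λ, λ' > 0, the identity (λ + λ')⟨u(λ), u(λ')⟩ = ‖g(λ) − g(λ')‖² + λ‖u(λ)‖² + λ'‖u(λ')‖². Suppose there exists a strictly decreasing sequence (λ_k)_{k≥0} of positive reals tending to 0 such that ∑_{k=1}^∞ √(λ_{k−1}) · ‖u(λ_k)‖ < ∞. Then √λ · u(λ) tends to 0 in the norm of H as λ → 0 from the right. -/
open RealInnerProductSpace

theorem stmt_6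
    {H : Type*} [NormedAddCommGroup H] [InnerProductSpace ℝ H] [CompleteSpace H]
    (u g : ℝ → H)
    (hid : ∀ l l' : ℝ, 0 < l → 0 < l' →
      (l + l') * ⟪u l, u l'⟫ =
        ‖g l - g l'‖ ^ 2 + l * ‖u l‖ ^ 2 + l' * ‖u l'‖ ^ 2)
    (lam : ℕ → ℝ) (hpos : ∀ k, 0 < lam k) (hanti : StrictAnti lam)
    (hlim : Filter.Tendsto lam Filter.atTop (nhds 0))
    (hsum : Summable (fun k : ℕ => Real.sqrt (lam k) * ‖u (lam (k + 1))‖)) :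
    Filter.Tendsto (fun l : ℝ => Real.sqrt l • u l)
      (nhdsWithin 0 (Set.Ioi 0)) (nhds 0) := by
  classical
  have key : ∀ a b : ℝ, 0 < b → b ≤ a → ‖u a‖ ≤ 2 * ‖u b‖ := by
    intro a b hb hba
    have ha : 0 < a := lt_of_lt_of_le hb hba
    have h := hid a b ha hb
    have hcs : ⟪u a, u b⟫ ≤ ‖u a‖ * ‖u b‖ := real_inner_le_norm _ _
    have hD : (0:ℝ) ≤ ‖g a - g b‖ ^ 2 := sq_nonneg _
    have h1 : a * ‖u a‖ ^ 2 ≤ (a + b) * (‖u a‖ * ‖u b‖) := by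
      have h2 : (a + b) * ⟪u a, u b⟫ ≤ (a + b) * (‖u a‖ * ‖u b‖) :=
        mul_le_mul_of_nonneg_left hcs (by positivity)
      nlinarith [sq_nonneg ‖u b‖, hpos 0]
    by_contra hcon
    push_neg at hcon
    have hub : (0:ℝ) ≤ ‖u b‖ := norm_nonneg _
    have hua : (0:ℝ) < ‖u a‖ := lt_of_le_of_lt (by linarith) hcon
    have hp1 : 0 < (‖u a‖ - 2 * ‖u b‖) * (a * ‖u a‖) :=
      mul_pos (by linarith) (mul_pos ha hua)
    have hp2 : 0 ≤ (a - b) * (‖u a‖ * ‖u b‖) :=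
      mul_nonneg (by linarith) (mul_nonneg hua.le hub)
    nlinarith [h1, hp1, hp2]
  rw [Metric.tendsto_nhdsWithin_nhds]
  intro ε hε
  have hterm := hsum.tendsto_atTop_zero
  rw [Metric.tendsto_atTop] at hterm
  obtain ⟨K, hK⟩ := hterm (ε / 2) (by linarith)
  refine ⟨lam K, hpos K, ?_⟩
  intro x hx hdx
  have hx0 : 0 < x := hx
  rw [Real.dist_eq, sub_zero, abs_of_pos hx0] at hdx
  have hex : ∃ n, lam n < x := (hlim.eventually (gt_mem_nhds hx0)).exists
  set m := Nat.find hex with hmdef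
  have hmlt : lam m < x := Nat.find_spec hex
  have hKm : K < m := by
    by_contra h
    push_neg at h
    have : lam K ≤ lam m := hanti.antitone h
    linarith
  have hm1 : 1 ≤ m := by omega
  set k := m - 1 with hkdef
  have hkm : k + 1 = m := by omega
  have hxk : x ≤ lam k := by
    have hk : k < m := by omega
    have := Nat.find_min hex hk
    linarith [not_lt.mp this]
  have hku : ‖u x‖ ≤ 2 * ‖u (lam (k + 1))‖ := by
    refine key x (lam (k + 1)) (hpos _) ?_
    rw [hkm]; exact le_of_lt hmlt
  have hkK : K ≤ k := by omega
  have hterm_small : Real.sqrt (lam k) * ‖u (lam (k + 1))‖ < ε / 2 := by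
    have := hK k hkK
    rw [Real.dist_eq, sub_zero, abs_of_nonneg (by positivity)] at this
    exact this
  rw [dist_eq_norm, sub_zero, norm_smul, Real.norm_eq_abs,
    abs_of_nonneg (Real.sqrt_nonneg x)]
  have hsq : Real.sqrt x ≤ Real.sqrt (lam k) := Real.sqrt_le_sqrt hxk
  calc Real.sqrt x * ‖u x‖
      ≤ Real.sqrt (lam k) * (2 * ‖u (lam (k + 1))‖) :=
        mul_le_mul hsq hku (norm_nonneg _) (Real.sqrt_nonneg _)
    _ = 2 * (Real.sqrt (lam k) * ‖u (lam (k + 1))‖) := by ring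
    _ < ε := by linarith
end

section
/- Let H be a real Hilbert space and u, g : (0, ∞) → H functions satisfying, for all λ, λ' > 0, the identity (λ + λ')⟨u(λ), u(λ')⟩ = ‖g(λ) − g(λ')‖² + λ‖u(λ)‖² + λ'‖u(λ')‖². Suppose there exists a strictly decreasing sequence (λ_k)_{k≥0} of positive reals tending to 0 such that ∑_{k=1}^∞ √(λ_{k−1}) · ‖u(λ_k)‖ < ∞. Then there exists w ∈ H such that g(λ) converges in norm to w as λ → 0 from the right. -/
open RealInnerProductSpace

theorem stmt_7
    {H : Type*} [NormedAddCommGroup H] [InnerProductSpace ℝ H] [CompleteSpace H]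
    (u g : ℝ → H)
    (hid : ∀ l l' : ℝ, 0 < l → 0 < l' →
      (l + l') * ⟪u l, u l'⟫ =
        ‖g l - g l'‖ ^ 2 + l * ‖u l‖ ^ 2 + l' * ‖u l'‖ ^ 2)
    (lam : ℕ → ℝ) (hpos : ∀ k, 0 < lam k) (hanti : StrictAnti lam)
    (hlim : Filter.Tendsto lam Filter.atTop (nhds 0))
    (hsum : Summable (fun k : ℕ => Real.sqrt (lam k) * ‖u (lam (k + 1))‖)) :
    ∃ w : H, Filter.Tendsto g (nhdsWithin 0 (Set.Ioi 0)) (nhds w) := by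
  have mono : ∀ l l' : ℝ, 0 < l' → l' < l → ‖u l‖ ≤ ‖u l'‖ := by
    intro l l' h0 hll
    have hl : 0 < l := h0.trans hll
    have h1 := hid l l' hl h0
    have cs := real_inner_le_norm (u l) (u l')
    have hg : (0:ℝ) ≤ ‖g l - g l'‖ ^ 2 := by positivity
    by_contra h
    push_neg at h
    have cs' : (l + l') * ⟪u l, u l'⟫ ≤ (l + l') * (‖u l‖ * ‖u l'‖) :=
      mul_le_mul_of_nonneg_left cs (by linarith)
    have h2 : l' * ‖u l'‖ < l * ‖u l‖ := by nlinarith [norm_nonneg (u l')]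
    have h3 : 0 < (‖u l‖ - ‖u l'‖) * (l * ‖u l‖ - l' * ‖u l'‖) :=
      mul_pos (by linarith) (by linarith)
    nlinarith [h3, cs']
  have key : ∀ l l' : ℝ, 0 < l' → l' < l →
      ‖g l - g l'‖ ≤ Real.sqrt 2 * Real.sqrt l * ‖u l'‖ := by
    intro l l' h0 hll
    have hl : 0 < l := h0.trans hll
    have h1 := hid l l' hl h0
    have cs := real_inner_le_norm (u l) (u l')
    have hm := mono l l' h0 hll
    have hsq : ‖g l - g l'‖ ^ 2 ≤ 2 * l * ‖u l'‖ ^ 2 := by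
      have cs' : (l + l') * ⟪u l, u l'⟫ ≤ (l + l') * (‖u l‖ * ‖u l'‖) :=
        mul_le_mul_of_nonneg_left cs (by linarith)
      have hab : ‖u l‖ * ‖u l'‖ ≤ ‖u l'‖ * ‖u l'‖ :=
        mul_le_mul_of_nonneg_right hm (norm_nonneg _)
      nlinarith [cs', hab,
        mul_nonneg (sub_nonneg.mpr hll.le)
          (mul_nonneg (norm_nonneg (u l)) (norm_nonneg (u l'))),
        mul_nonneg hl.le (sub_nonneg.mpr hab),
        norm_nonneg (u l'), norm_nonneg (u l)]
    calc ‖g l - g l'‖ = Real.sqrt (‖g l - g l'‖ ^ 2) := (Real.sqrt_sq (norm_nonneg _)).symm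
      _ ≤ Real.sqrt (2 * l * ‖u l'‖ ^ 2) := Real.sqrt_le_sqrt hsq
      _ = Real.sqrt 2 * Real.sqrt l * ‖u l'‖ := by
          rw [Real.sqrt_mul (by positivity : (0:ℝ) ≤ 2 * l),
            Real.sqrt_mul (by norm_num : (0:ℝ) ≤ 2), Real.sqrt_sq (norm_nonneg _)]
  have hc0 : Filter.Tendsto (fun k : ℕ => Real.sqrt (lam k) * ‖u (lam (k + 1))‖)
      Filter.atTop (nhds 0) := hsum.tendsto_atTop_zero
  have hdle : ∀ n : ℕ, dist (g (lam n)) (g (lam (n + 1))) ≤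
      Real.sqrt 2 * (Real.sqrt (lam n) * ‖u (lam (n + 1))‖) := by
    intro n
    rw [dist_eq_norm]
    calc ‖g (lam n) - g (lam (n + 1))‖
        ≤ Real.sqrt 2 * Real.sqrt (lam n) * ‖u (lam (n + 1))‖ :=
          key _ _ (hpos _) (hanti (Nat.lt_succ_self n))
      _ = Real.sqrt 2 * (Real.sqrt (lam n) * ‖u (lam (n + 1))‖) := mul_assoc _ _ _
  have hcs : CauchySeq (fun n => g (lam n)) :=
    cauchySeq_of_summable_dist
      (Summable.of_nonneg_of_le (fun n => dist_nonneg) hdle (hsum.mul_left (Real.sqrt 2)))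
  obtain ⟨w, hw⟩ := cauchySeq_tendsto_of_complete hcs
  refine ⟨w, ?_⟩
  rw [Metric.tendsto_nhdsWithin_nhds]
  intro ε hε
  have hε2 : 0 < ε / 2 := by linarith
  obtain ⟨K₁, hK₁⟩ := Metric.tendsto_atTop.mp (hc0.const_mul (Real.sqrt 2)) (ε / 2) hε2
  obtain ⟨K₂, hK₂⟩ := Metric.tendsto_atTop.mp hw (ε / 2) hε2
  set K := max K₁ K₂ with hK
  refine ⟨lam K, hpos K, ?_⟩
  intro x hx hdx
  have hx0 : 0 < x := hx
  rw [Real.dist_eq, sub_zero, abs_of_pos hx0] at hdx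
  have hex : ∃ n, lam n < x := by
    by_contra hc
    push_neg at hc
    have : x ≤ (0:ℝ) := ge_of_tendsto hlim (Filter.Eventually.of_forall hc)
    linarith
  set j₀ := Nat.find hex with hj₀
  have hfind : lam j₀ < x := Nat.find_spec hex
  have hKlt : K < j₀ := by
    by_contra h
    push_neg at h
    have : lam K ≤ lam j₀ := hanti.antitone h
    linarith
  have hj₀pos : 0 < j₀ := lt_of_le_of_lt (Nat.zero_le K) hKlt
  set j := j₀ - 1 with hjdef
  have hj : j + 1 = j₀ := Nat.succ_pred_eq_of_pos hj₀pos
  have hjK : K ≤ j := Nat.le_sub_one_of_lt hKlt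
  have hxlam : x ≤ lam j := le_of_not_gt (Nat.find_min hex (by omega))
  have hb1 : ‖g x - g (lam j₀)‖ ≤ Real.sqrt 2 * Real.sqrt x * ‖u (lam j₀)‖ :=
    key x (lam j₀) (hpos _) hfind
  have hb2 : Real.sqrt 2 * Real.sqrt x * ‖u (lam j₀)‖ ≤
      Real.sqrt 2 * (Real.sqrt (lam j) * ‖u (lam (j + 1))‖) := by
    rw [hj, mul_assoc]
    exact mul_le_mul_of_nonneg_left
      (mul_le_mul_of_nonneg_right (Real.sqrt_le_sqrt hxlam) (norm_nonneg _))
      (Real.sqrt_nonneg 2)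
  have hsmall : Real.sqrt 2 * (Real.sqrt (lam j) * ‖u (lam (j + 1))‖) < ε / 2 := by
    have h := hK₁ j (le_trans (le_max_left _ _) hjK)
    rw [mul_zero, Real.dist_eq, sub_zero] at h
    calc Real.sqrt 2 * (Real.sqrt (lam j) * ‖u (lam (j + 1))‖)
        ≤ |Real.sqrt 2 * (Real.sqrt (lam j) * ‖u (lam (j + 1))‖)| := le_abs_self _
      _ < ε / 2 := h
  have hw2 : dist (g (lam j₀)) w < ε / 2 := hK₂ j₀ (le_trans (le_max_right _ _) hKlt.le)
  calc dist (g x) w ≤ dist (g x) (g (lam j₀)) + dist (g (lam j₀)) w := dist_triangle _ _ _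
    _ < ε / 2 + ε / 2 := by
        apply add_lt_add_of_le_of_lt _ hw2
        rw [dist_eq_norm]
        exact le_trans hb1 (le_of_lt (lt_of_le_of_lt hb2 hsmall))
    _ = ε := by ring
end

section
/- (Proposition 1.) Let H be a real Hilbert space and u, g : (0, ∞) → H functions satisfying, for all λ, λ' > 0, the identity (λ + λ')⟨u(λ), u(λ')⟩ = ‖g(λ) − g(λ')‖² + λ‖u(λ)‖² + λ'‖u(λ')‖². If there exists a strictly decreasing sequence (λ_k)_{k≥0} of positive reals tending to 0 with ∑_{k=1}^∞ √(λ_{k−1}) · ‖u(λ_k)‖ < ∞, then both: (i) √λ · u(λ) → 0 in norm as λ → 0⁺, and (ii) there exists w ∈ H with g(λ) → w in norm as λ → 0⁺. -/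
/-!
Expanding `‖g l - g l'‖²` with the identity and Cauchy–Schwarz gives
`‖g l - g l'‖² ≤ (‖u l‖ - ‖u l'‖) (l' ‖u l'‖ - l ‖u l‖)`. Since the left side is nonnegative,
`‖u ·‖` is nonincreasing on `(0, ∞)`, and then `‖g l - g l'‖ ≤ √l' ‖u l‖` for `l ≤ l'`.
Along the sequence this makes `g (λ_k)` Cauchy with summable increments. For
`λ_{k+1} < λ ≤ λ_k`, both `√λ ‖u λ‖` and `‖g λ - g (λ_k)‖` are bounded by
`√λ_k ‖u (λ_{k+1})‖`, the `k`-th term of the convergent series, so both limits follow.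
-/

open RealInnerProductSpace Filter Topology Set

theorem exists_ge_mem_Ioc_of_antitone {lam : ℕ → ℝ} (hanti : Antitone lam)
    (hlim : Tendsto lam atTop (𝓝 0)) {x : ℝ} (hx : 0 < x) {K : ℕ} (hxK : x ≤ lam K) :
    ∃ k, K ≤ k ∧ lam (k + 1) < x ∧ x ≤ lam k := by
  classical
  have hex : ∃ n, lam n < x := (hlim.eventually (gt_mem_nhds hx)).exists
  have hKm : K < Nat.find hex := by
    by_contra! hle
    exact (Nat.find_spec hex).not_ge (hxK.trans (hanti hle))
  refine ⟨Nat.find hex - 1, by omega, ?_, ?_⟩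
  · rw [Nat.sub_add_cancel (by omega)]
    exact Nat.find_spec hex
  · exact not_lt.mp (Nat.find_min hex (by omega))

theorem tendsto_nhdsGT_zero_of_dist_le {X : Type*} [PseudoMetricSpace X] {f : ℝ → X} {a : X}
    {lam c : ℕ → ℝ} (hpos : ∀ k, 0 < lam k) (hanti : Antitone lam)
    (hlim : Tendsto lam atTop (𝓝 0)) (hc : Tendsto c atTop (𝓝 0))
    (hf : ∀ k x, lam (k + 1) < x → x ≤ lam k → dist (f x) a ≤ c k) :
    Tendsto f (𝓝[>] 0) (𝓝 a) := by
  refine Metric.tendsto_nhds.mpr fun ε hε => ?_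
  obtain ⟨K, hK⟩ := (hc.eventually (gt_mem_nhds hε)).exists_forall_of_atTop
  filter_upwards [Ioo_mem_nhdsGT (hpos K)] with x hx
  obtain ⟨k, hKk, hk1, hk2⟩ := exists_ge_mem_Ioc_of_antitone hanti hlim hx.1 hx.2.le
  exact (hf k x hk1 hk2).trans_lt (hK k hKk)

section

variable {H : Type*} [NormedAddCommGroup H] [InnerProductSpace ℝ H]

def ResolventIdentity (u g : ℝ → H) : Prop :=
  ∀ l l' : ℝ, 0 < l → 0 < l' →
    (l + l') * ⟪u l, u l'⟫ = ‖g l - g l'‖ ^ 2 + l * ‖u l‖ ^ 2 + l' * ‖u l'‖ ^ 2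

namespace ResolventIdentity

variable {u g : ℝ → H}

theorem sq_norm_sub_le (hid : ResolventIdentity u g) {l l' : ℝ} (hl : 0 < l) (hl' : 0 < l') :
    ‖g l - g l'‖ ^ 2 ≤ (‖u l‖ - ‖u l'‖) * (l' * ‖u l'‖ - l * ‖u l‖) := by
  have hcs : (l + l') * ⟪u l, u l'⟫ ≤ (l + l') * (‖u l‖ * ‖u l'‖) :=
    mul_le_mul_of_nonneg_left (real_inner_le_norm _ _) (by positivity)
  linarith [hid l l' hl hl']

theorem antitoneOn_norm (hid : ResolventIdentity u g) : AntitoneOn (fun l => ‖u l‖) (Ioi 0) := by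
  intro l hl l' hl' hle
  by_contra! hlt
  have hpos : 0 < (‖u l'‖ - ‖u l‖) * (l' * ‖u l'‖ - l * ‖u l‖) := by
    apply mul_pos (sub_pos.mpr hlt)
    nlinarith [norm_nonneg (u l), mul_lt_mul_of_pos_left hlt (show 0 < l from hl)]
  linarith [hid.sq_norm_sub_le hl hl', sq_nonneg ‖g l - g l'‖]

theorem norm_sub_le (hid : ResolventIdentity u g) {l l' : ℝ} (hl : 0 < l) (hle : l ≤ l') :
    ‖g l - g l'‖ ≤ √l' * ‖u l‖ := by
  have hl' : 0 < l' := hl.trans_le hle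
  have hmono : ‖u l'‖ ≤ ‖u l‖ := hid.antitoneOn_norm hl hl' hle
  rw [← sq_le_sq₀ (norm_nonneg _) (by positivity), mul_pow, Real.sq_sqrt hl'.le]
  nlinarith [hid.sq_norm_sub_le hl hl', mul_nonneg (sub_nonneg.mpr hmono) (mul_nonneg hl.le
    (norm_nonneg (u l))), mul_nonneg hl'.le (sq_nonneg (‖u l‖ - ‖u l'‖)),
    mul_nonneg hl'.le (mul_nonneg (norm_nonneg (u l)) (norm_nonneg (u l')))]

end ResolventIdentity

end

theorem stmt_8
    {H : Type*} [NormedAddCommGroup H] [InnerProductSpace ℝ H] [CompleteSpace H]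
    (u g : ℝ → H)
    (hid : ∀ l l' : ℝ, 0 < l → 0 < l' →
      (l + l') * ⟪u l, u l'⟫ =
        ‖g l - g l'‖ ^ 2 + l * ‖u l‖ ^ 2 + l' * ‖u l'‖ ^ 2)
    (lam : ℕ → ℝ) (hpos : ∀ k, 0 < lam k) (hanti : StrictAnti lam)
    (hlim : Filter.Tendsto lam Filter.atTop (nhds 0))
    (hsum : Summable (fun k : ℕ => Real.sqrt (lam k) * ‖u (lam (k + 1))‖)) :
    Filter.Tendsto (fun l : ℝ => Real.sqrt l • u l)
      (nhdsWithin 0 (Set.Ioi 0)) (nhds 0) ∧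
    ∃ w : H, Filter.Tendsto g (nhdsWithin 0 (Set.Ioi 0)) (nhds w) := by
  have hid : ResolventIdentity u g := hid
  have hu : ∀ k x, lam (k + 1) ≤ x → ‖u x‖ ≤ ‖u (lam (k + 1))‖ := fun k x hk =>
    hid.antitoneOn_norm (hpos _) ((hpos _).trans_le hk) hk
  have hg : ∀ k x, lam (k + 1) ≤ x → x ≤ lam k →
      dist (g x) (g (lam k)) ≤ √(lam k) * ‖u (lam (k + 1))‖ := fun k x hk1 hk2 =>
    (dist_eq_norm _ _).trans_le <| (hid.norm_sub_le ((hpos _).trans_le hk1) hk2).trans <|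
      mul_le_mul_of_nonneg_left (hu k x hk1) (Real.sqrt_nonneg _)
  obtain ⟨w, hw⟩ := cauchySeq_tendsto_of_complete <|
    cauchySeq_of_dist_le_of_summable (f := fun k => g (lam k)) _
      (fun k => (dist_comm _ _).trans_le (hg k _ le_rfl (hanti k.lt_succ_self).le)) hsum
  constructor
  · refine tendsto_nhdsGT_zero_of_dist_le hpos hanti.antitone hlim hsum.tendsto_atTop_zero
      fun k x hk1 hk2 => ?_
    rw [dist_zero_right, norm_smul, Real.norm_of_nonneg (Real.sqrt_nonneg _)]
    exact mul_le_mul (Real.sqrt_le_sqrt hk2) (hu k x hk1.le) (norm_nonneg _) (Real.sqrt_nonneg _)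
  · refine ⟨w, tendsto_nhdsGT_zero_of_dist_le hpos hanti.antitone hlim
      (by simpa using hsum.tendsto_atTop_zero.add (tendsto_iff_dist_tendsto_zero.mp hw))
      fun k x hk1 hk2 => ?_⟩
    calc dist (g x) w ≤ dist (g x) (g (lam k)) + dist (g (lam k)) w := dist_triangle _ _ _
      _ ≤ √(lam k) * ‖u (lam (k + 1))‖ + dist (g (lam k)) w := by gcongr; exact hg k x hk1.le hk2
end

section
/- Let H be a real Hilbert space and u, g : (0, ∞) → H functions satisfying, for all λ, λ' > 0, the identity (λ + λ')⟨u(λ), u(λ')⟩ = ‖g(λ) − g(λ')‖² + λ‖u(λ)‖² + λ'‖u(λ')‖². Then the following two conditions are equivalent: (a) √λ · u(λ) → 0 in norm as λ → 0⁺ and g(λ) converges in norm to some w ∈ H as λ → 0⁺; (b) (λ + λ')⟨u(λ), u(λ')⟩ → 0 as (λ, λ') → (0, 0) with λ, λ' > 0 (i.e., for every ε > 0 there is δ > 0 such that 0 < λ, λ' < δ implies (λ + λ')⟨u(λ), u(λ')⟩ < ε). -/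
open RealInnerProductSpace

theorem stmt_9
    {H : Type*} [NormedAddCommGroup H] [InnerProductSpace ℝ H] [CompleteSpace H]
    (u g : ℝ → H)
    (hid : ∀ l l' : ℝ, 0 < l → 0 < l' →
      (l + l') * ⟪u l, u l'⟫ =
        ‖g l - g l'‖ ^ 2 + l * ‖u l‖ ^ 2 + l' * ‖u l'‖ ^ 2) :
    (Filter.Tendsto (fun l : ℝ => Real.sqrt l • u l)
        (nhdsWithin 0 (Set.Ioi 0)) (nhds 0) ∧
      ∃ w : H, Filter.Tendsto g (nhdsWithin 0 (Set.Ioi 0)) (nhds w)) ↔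
    (∀ ε : ℝ, 0 < ε → ∃ δ : ℝ, 0 < δ ∧ ∀ l l' : ℝ,
      0 < l → l < δ → 0 < l' → l' < δ → (l + l') * ⟪u l, u l'⟫ < ε) := by
  constructor
  · rintro ⟨h1, w, h2⟩ ε hε
    have hε3 : (0:ℝ) < ε / 3 := by linarith
    rw [Metric.tendsto_nhdsWithin_nhds] at h1 h2
    obtain ⟨δ1, hδ1, H1⟩ := h1 (Real.sqrt (ε / 3)) (Real.sqrt_pos.mpr hε3)
    obtain ⟨δ2, hδ2, H2⟩ := h2 (Real.sqrt (ε / 3) / 2) (by positivity)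
    refine ⟨min δ1 δ2, lt_min hδ1 hδ2, ?_⟩
    intro l l' hl hlδ hl' hl'δ
    have key : ∀ x : ℝ, 0 < x → x < min δ1 δ2 → x * ‖u x‖ ^ 2 < ε / 3 := by
      intro x hx hxδ
      have h := H1 hx (by
        rw [Real.dist_eq, sub_zero, abs_of_pos hx]
        exact lt_of_lt_of_le hxδ (min_le_left _ _))
      rw [dist_zero_right] at h
      have h2 := (Real.lt_sqrt (norm_nonneg _)).mp h
      rwa [norm_smul, Real.norm_eq_abs, abs_of_nonneg (Real.sqrt_nonneg _),
        mul_pow, Real.sq_sqrt hx.le] at h2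
    have hkl := key l hl hlδ
    have hkl' := key l' hl' hl'δ
    have hgl := H2 hl (by
      rw [Real.dist_eq, sub_zero, abs_of_pos hl]
      exact lt_of_lt_of_le hlδ (min_le_right _ _))
    have hgl' := H2 hl' (by
      rw [Real.dist_eq, sub_zero, abs_of_pos hl']
      exact lt_of_lt_of_le hl'δ (min_le_right _ _))
    have hg : ‖g l - g l'‖ < Real.sqrt (ε / 3) := by
      calc ‖g l - g l'‖ = dist (g l) (g l') := (dist_eq_norm _ _).symm
        _ ≤ dist (g l) w + dist (g l') w := dist_triangle_right _ _ _
        _ < Real.sqrt (ε / 3) / 2 + Real.sqrt (ε / 3) / 2 := by linarith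
        _ = Real.sqrt (ε / 3) := by ring
    have hg2 : ‖g l - g l'‖ ^ 2 < ε / 3 := (Real.lt_sqrt (norm_nonneg _)).mp hg
    rw [hid l l' hl hl']
    linarith
  · intro hb
    constructor
    · rw [Metric.tendsto_nhdsWithin_nhds]
      intro ε hε
      obtain ⟨δ, hδ, H⟩ := hb (ε ^ 2) (by positivity)
      refine ⟨δ, hδ, ?_⟩
      intro x hx hxd
      have hx0 : (0:ℝ) < x := hx
      rw [Real.dist_eq, sub_zero, abs_of_pos hx0] at hxd
      have h := H x x hx0 hxd hx0 hxd
      rw [hid x x hx0 hx0, sub_self, norm_zero] at h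
      rw [dist_zero_right]
      refine lt_of_pow_lt_pow_left₀ 2 hε.le ?_
      rw [norm_smul, Real.norm_eq_abs, abs_of_nonneg (Real.sqrt_nonneg _),
        mul_pow, Real.sq_sqrt hx0.le]
      nlinarith [mul_nonneg hx0.le (sq_nonneg ‖u x‖)]
    · have hc : Cauchy (Filter.map g (nhdsWithin 0 (Set.Ioi 0))) := by
        rw [Metric.cauchy_iff]
        refine ⟨Filter.map_neBot, ?_⟩
        intro ε hε
        obtain ⟨δ, hδ, H⟩ := hb (ε ^ 2) (by positivity)
        refine ⟨g '' Set.Ioo 0 δ, ?_, ?_⟩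
        · exact Filter.image_mem_map (Ioo_mem_nhdsGT_of_mem ⟨le_refl 0, hδ⟩)
        · rintro x ⟨a, ⟨ha0, haδ⟩, rfl⟩ y ⟨b, ⟨hb0, hbδ⟩, rfl⟩
          rw [dist_eq_norm]
          refine lt_of_pow_lt_pow_left₀ 2 hε.le ?_
          have h := H a b ha0 haδ hb0 hbδ
          rw [hid a b ha0 hb0] at h
          nlinarith [mul_nonneg ha0.le (sq_nonneg ‖u a‖),
            mul_nonneg hb0.le (sq_nonneg ‖u b‖)]
      obtain ⟨w, hw⟩ := CompleteSpace.complete hc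
      exact ⟨w, hw⟩
end

section
/- For every δ ∈ (0, 1) and every t > 0, the family (k : ℤ) ↦ (t δ^k)^{3/2} e^{−t δ^k} is summable, and its sum satisfies ∑_{k ∈ ℤ} (t δ^k)^{3/2} e^{−t δ^k} ≤ (3/(2e))^{3/2} + √π / (2(1 − δ)). -/
/-!
Put `h s = F (t * δ ^ s)` with `F u = u ^ (3/2) * exp (-u)`. Since `F` increases up to `u = 3/2`,
where it attains `(3/(2e))^(3/2)`, and decreases afterwards, `h` is unimodal on `ℝ`; for such a
function `∑_{k ∈ ℤ} h k ≤ max h + ∫ h`. The substitution `u = t * δ ^ s` gives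
`∫ h = Γ(3/2) / log (1/δ) = √π / (2 log (1/δ))`, and `log (1/δ) ≥ 1 - δ`.
-/

open Real Set MeasureTheory

section RpowMulExpNeg

variable {p : ℝ}

theorem hasDerivAt_rpow_mul_exp_neg {u : ℝ} (hu : 0 < u) :
    HasDerivAt (fun u => u ^ p * exp (-u)) ((p - u) * u ^ (p - 1) * exp (-u)) u := by
  refine ((hasDerivAt_rpow_const (Or.inl hu.ne')).mul (hasDerivAt_neg u).exp).congr_deriv ?_
  rw [rpow_sub_one hu.ne']
  field_simp
  ring

theorem continuous_rpow_mul_exp_neg (hp : 0 ≤ p) : Continuous fun u : ℝ => u ^ p * exp (-u) := by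
  fun_prop (disch := exact hp)

theorem monotoneOn_rpow_mul_exp_neg (hp : 0 ≤ p) :
    MonotoneOn (fun u => u ^ p * exp (-u)) (Icc 0 p) := by
  refine monotoneOn_of_hasDerivWithinAt_nonneg (f' := fun u => (p - u) * u ^ (p - 1) * exp (-u))
    (convex_Icc 0 p) (continuous_rpow_mul_exp_neg hp).continuousOn (fun u hu => ?_)
    (fun u hu => ?_) <;> rw [interior_Icc] at hu
  · exact (hasDerivAt_rpow_mul_exp_neg hu.1).hasDerivWithinAt
  · have : 0 ≤ p - u := by linarith [hu.2]
    have := hu.1.le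
    positivity

theorem antitoneOn_rpow_mul_exp_neg (hp : 0 ≤ p) :
    AntitoneOn (fun u => u ^ p * exp (-u)) (Ici p) := by
  refine antitoneOn_of_hasDerivWithinAt_nonpos (f' := fun u => (p - u) * u ^ (p - 1) * exp (-u))
    (convex_Ici p) (continuous_rpow_mul_exp_neg hp).continuousOn (fun u hu => ?_)
    (fun u hu => ?_) <;> rw [interior_Ici] at hu
  · exact (hasDerivAt_rpow_mul_exp_neg (hp.trans_lt hu)).hasDerivWithinAt
  · have hpu : p - u ≤ 0 := by linarith [mem_Ioi.1 hu]
    have := (hp.trans_lt hu).le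
    exact mul_nonpos_of_nonpos_of_nonneg (mul_nonpos_of_nonpos_of_nonneg hpu (by positivity))
      (exp_pos _).le

theorem rpow_mul_exp_neg_le (hp : 0 ≤ p) {u : ℝ} (hu : 0 ≤ u) :
    u ^ p * exp (-u) ≤ (p / exp 1) ^ p := by
  have hmax : u ^ p * exp (-u) ≤ p ^ p * exp (-p) := by
    rcases le_total u p with h | h
    · exact monotoneOn_rpow_mul_exp_neg hp ⟨hu, h⟩ ⟨hp, le_rfl⟩ h
    · exact antitoneOn_rpow_mul_exp_neg hp (mem_Ici.2 le_rfl) h h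
  rwa [div_rpow hp (exp_pos 1).le, exp_one_rpow, div_eq_mul_inv, ← exp_neg]

end RpowMulExpNeg

section UnimodalSum

variable {h : ℝ → ℝ}

theorem AntitoneOn.sum_range_le_add_integral_Ioi {x₀ : ℝ} (hanti : AntitoneOn h (Ici x₀))
    (hnn : ∀ x ∈ Ici x₀, 0 ≤ h x) (hint : IntegrableOn h (Ioi x₀)) (N : ℕ) :
    ∑ m ∈ Finset.range N, h (x₀ + m) ≤ h x₀ + ∫ x in Ioi x₀, h x := by
  have hI : 0 ≤ ∫ x in Ioi x₀, h x :=
    setIntegral_nonneg measurableSet_Ioi fun x hx => hnn x (mem_Ici.2 (le_of_lt hx))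
  cases N with
  | zero => simpa using add_nonneg (hnn x₀ (mem_Ici.2 le_rfl)) hI
  | succ N =>
    rw [Finset.sum_range_succ', Nat.cast_zero, add_zero, add_comm]
    gcongr
    calc ∑ m ∈ Finset.range N, h (x₀ + ↑(m + 1))
        ≤ ∫ x in x₀..x₀ + N, h x := (hanti.mono Icc_subset_Ici_self).sum_le_integral
      _ ≤ ∫ x in Ioi x₀, h x := by
        rw [intervalIntegral.integral_of_le (by simp)]
        exact setIntegral_mono_set hint
          ((ae_restrict_mem measurableSet_Ioi).mono fun x hx => hnn x (mem_Ici.2 (le_of_lt hx)))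
          Ioc_subset_Ioi_self.eventuallyLE

theorem AntitoneOn.summable_and_tsum_le_add_integral_Ioi {x₀ : ℝ} (hanti : AntitoneOn h (Ici x₀))
    (hnn : ∀ x ∈ Ici x₀, 0 ≤ h x) (hint : IntegrableOn h (Ioi x₀)) :
    Summable (fun m : ℕ => h (x₀ + m)) ∧ ∑' m : ℕ, h (x₀ + m) ≤ h x₀ + ∫ x in Ioi x₀, h x := by
  have hnn' : ∀ m : ℕ, 0 ≤ h (x₀ + m) := fun m => hnn _ (by simp)
  have hsum := hanti.sum_range_le_add_integral_Ioi hnn hint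
  exact ⟨summable_of_sum_range_le hnn' hsum, Real.tsum_le_of_sum_range_le hnn' hsum⟩

theorem add_le_add_integral_of_unimodal {a c M : ℝ} (hmono : MonotoneOn h (Iic c))
    (hanti : AntitoneOn h (Ici c)) (hc : c ∈ Icc a (a + 1)) (ha : h a ≤ M) (ha' : h (a + 1) ≤ M)
    (hint : IntervalIntegrable h volume a (a + 1)) :
    h a + h (a + 1) ≤ M + ∫ x in a..a + 1, h x := by
  have hmin : ∀ x ∈ Icc a (a + 1), min (h a) (h (a + 1)) ≤ h x := fun x hx => by
    rcases le_total x c with hxc | hcx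
    · exact (min_le_left _ _).trans (hmono hc.1 hxc hx.1)
    · exact (min_le_right _ _).trans (hanti hcx hc.2 hx.2)
  have hint_min : min (h a) (h (a + 1)) ≤ ∫ x in a..a + 1, h x := by
    simpa using intervalIntegral.integral_mono_on (by linarith) intervalIntegrable_const hint hmin
  linarith [min_add_max (h a) (h (a + 1)), max_le ha ha']

theorem summable_and_tsum_int_le_of_unimodal {a M : ℝ} (hnn : ∀ x, 0 ≤ h x) (hM : ∀ x, h x ≤ M)
    (hmono : MonotoneOn h (Iic a)) (hanti : AntitoneOn h (Ici a)) (hint : Integrable h) :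
    Summable (fun k : ℤ => h k) ∧ ∑' k : ℤ, h k ≤ M + ∫ x, h x := by
  -- The tails on either side of `⌊a⌋, ⌊a⌋ + 1` are compared with the integral of `h` over them;
  -- of the two terms at the peak, one is paid for by `M`, the other by `∫ x in ⌊a⌋..⌊a⌋ + 1, h x`.
  set n : ℤ := ⌊a⌋
  have hna : (n : ℝ) ≤ a := Int.floor_le a
  have han : a ≤ n + 1 := (Int.lt_floor_add_one a).le
  obtain ⟨hR, hR_le⟩ := (hanti.mono (Ici_subset_Ici.2 han)).summable_and_tsum_le_add_integral_Ioi
    (fun x _ => hnn x) hint.integrableOn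
  have hanti_neg : AntitoneOn (fun x => h (-x)) (Ici (-n)) := fun x hx y hy hxy =>
    hmono (mem_Iic.2 (by linarith [mem_Ici.1 hy])) (mem_Iic.2 (by linarith [mem_Ici.1 hx]))
      (neg_le_neg hxy)
  obtain ⟨hL, hL_le⟩ := hanti_neg.summable_and_tsum_le_add_integral_Ioi (fun x _ => hnn (-x))
    hint.comp_neg.integrableOn
  have hsum : HasSum (fun k : ℤ => h ((n + 1 + k : ℤ) : ℝ))
      (∑' m : ℕ, h (n + 1 + m) + ∑' m : ℕ, h (-(-n + m))) := by
    refine HasSum.of_nat_of_neg_add_one ?_ ?_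
    · simpa using hR.hasSum
    · convert hL.hasSum using 3 with m
      push_cast; ring_nf
  have hZ : HasSum (fun k : ℤ => h k) _ := (Equiv.addLeft (n + 1)).hasSum_iff.mp hsum
  refine ⟨hZ.summable, ?_⟩
  have hmid := add_le_add_integral_of_unimodal hmono hanti ⟨hna, han⟩ (hM n) (hM (n + 1))
    hint.intervalIntegrable
  have hsplit : ∫ x, h x = (∫ x in Iic (n : ℝ), h x) + ((∫ x in (n : ℝ)..n + 1, h x) +
      ∫ x in Ioi ((n : ℝ) + 1), h x) := by
    rw [intervalIntegral.integral_interval_add_Ioi hint.integrableOn hint.integrableOn,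
      intervalIntegral.integral_Iic_add_Ioi hint.integrableOn hint.integrableOn]
  rw [hZ.tsum_eq, hsplit]
  rw [integral_comp_neg_Ioi, neg_neg] at hL_le
  linarith

end UnimodalSum

section GeometricSubstitution

variable {t δ : ℝ}

theorem image_mul_rpow_univ (ht : 0 < t) (hδ0 : 0 < δ) (hδ1 : δ < 1) :
    (fun s : ℝ => t * δ ^ s) '' univ = Ioi 0 := by
  refine Subset.antisymm (image_subset_iff.2 fun s _ => show 0 < t * δ ^ s by positivity)
    fun y hy => ⟨logb δ (y / t), mem_univ _, ?_⟩
  dsimp only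
  rw [rpow_logb hδ0 hδ1.ne (div_pos hy ht)]
  field_simp

theorem abs_deriv_smul_gamma_integrand {p : ℝ} (ht : 0 < t) (hδ0 : 0 < δ) (hδ1 : δ < 1) (s : ℝ) :
    |t * (δ ^ s * log δ)| • (exp (-(t * δ ^ s)) * (t * δ ^ s) ^ (p - 1)) =
      -log δ * ((t * δ ^ s) ^ p * exp (-(t * δ ^ s))) := by
  have hu : 0 < t * δ ^ s := by positivity
  have hlog : log δ < 0 := log_neg hδ0 hδ1
  rw [smul_eq_mul, ← mul_assoc, abs_of_neg (by nlinarith), rpow_sub_one hu.ne']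
  field_simp

theorem integrable_and_integral_rpow_mul_exp_neg_comp_mul_rpow {p : ℝ} (hp : 0 < p) (ht : 0 < t)
    (hδ0 : 0 < δ) (hδ1 : δ < 1) :
    Integrable (fun s : ℝ => (t * δ ^ s) ^ p * exp (-(t * δ ^ s))) ∧
      ∫ s : ℝ, (t * δ ^ s) ^ p * exp (-(t * δ ^ s)) = Gamma p / -log δ := by
  have hL : 0 < -log δ := neg_pos.2 (log_neg hδ0 hδ1)
  have hderiv : ∀ s ∈ univ,
      HasDerivWithinAt (fun s : ℝ => t * δ ^ s) (t * (δ ^ s * log δ)) univ s := fun s _ =>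
    ((hasStrictDerivAt_const_rpow hδ0 s).hasDerivAt.const_mul t).hasDerivWithinAt
  have hinj : InjOn (fun s : ℝ => t * δ ^ s) univ := fun x _ y _ hxy =>
    (strictAnti_rpow_of_base_lt_one hδ0 hδ1).injective (mul_left_cancel₀ ht.ne' hxy)
  have himage := image_mul_rpow_univ ht hδ0 hδ1
  have hint := (integrableOn_image_iff_integrableOn_abs_deriv_smul MeasurableSet.univ hderiv hinj
    fun u => exp (-u) * u ^ (p - 1)).1 (himage ▸ GammaIntegral_convergent hp)
  have hval := integral_image_eq_integral_abs_deriv_smul MeasurableSet.univ hderiv hinj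
    fun u => exp (-u) * u ^ (p - 1)
  simp only [abs_deriv_smul_gamma_integrand ht hδ0 hδ1, integrableOn_univ, setIntegral_univ]
    at hint hval
  rw [himage, ← Gamma_eq_integral hp, integral_const_mul] at hval
  refine ⟨(hint.const_mul (-log δ)⁻¹).congr (Filter.Eventually.of_forall fun s => ?_), ?_⟩
  · simp only [inv_mul_cancel_left₀ hL.ne']
  · rw [hval, mul_div_cancel_left₀ _ hL.ne']

end GeometricSubstitution

theorem Real.Gamma_three_halves : Gamma (3 / 2) = √π / 2 := by
  rw [show (3 / 2 : ℝ) = 1 / 2 + 1 by norm_num, Gamma_add_one (by norm_num), Gamma_one_half_eq]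
  ring

theorem unimodal_comp_antitone {F u : ℝ → ℝ} {a c : ℝ} (hF₁ : MonotoneOn F (Icc 0 c))
    (hF₂ : AntitoneOn F (Ici c)) (hu : Antitone u) (hu₀ : ∀ s, 0 ≤ u s) (ha : u a = c) :
    MonotoneOn (F ∘ u) (Iic a) ∧ AntitoneOn (F ∘ u) (Ici a) := by
  refine ⟨fun x hx y hy hxy => hF₂ ?_ ?_ (hu hxy), fun x hx y hy hxy => hF₁ ?_ ?_ (hu hxy)⟩
  · exact ha ▸ hu hy
  · exact ha ▸ hu hx
  · exact ⟨hu₀ y, ha ▸ hu hy⟩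
  · exact ⟨hu₀ x, ha ▸ hu hx⟩

theorem stmt_11 (δ : ℝ) (hδ : δ ∈ Set.Ioo (0 : ℝ) 1) (t : ℝ) (ht : 0 < t) :
    Summable (fun k : ℤ => (t * δ ^ k) ^ ((3 : ℝ) / 2) * Real.exp (-(t * δ ^ k))) ∧
    ∑' k : ℤ, (t * δ ^ k) ^ ((3 : ℝ) / 2) * Real.exp (-(t * δ ^ k)) ≤
      (3 / (2 * Real.exp 1)) ^ ((3 : ℝ) / 2) + Real.sqrt Real.pi / (2 * (1 - δ)) := by
  obtain ⟨hδ0, hδ1⟩ := hδ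
  set u : ℝ → ℝ := fun s => t * δ ^ s
  have hu₀ : ∀ s, 0 ≤ u s := fun s => by positivity
  have hu : Antitone u := fun x y hxy =>
    mul_le_mul_of_nonneg_left (antitone_rpow_of_base_le_one hδ0 hδ1.le hxy) ht.le
  obtain ⟨a, -, ha⟩ : (3 / 2 : ℝ) ∈ u '' univ := image_mul_rpow_univ ht hδ0 hδ1 ▸ by norm_num
  obtain ⟨hmono, hanti⟩ := unimodal_comp_antitone (monotoneOn_rpow_mul_exp_neg (by norm_num))
    (antitoneOn_rpow_mul_exp_neg (by norm_num)) hu hu₀ ha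
  have hM : ∀ s, u s ^ ((3 : ℝ) / 2) * exp (-u s) ≤ (3 / (2 * exp 1)) ^ ((3 : ℝ) / 2) := fun s => by
    simpa only [div_div] using rpow_mul_exp_neg_le (p := 3 / 2) (by norm_num) (hu₀ s)
  obtain ⟨hint, hval⟩ :=
    integrable_and_integral_rpow_mul_exp_neg_comp_mul_rpow (p := 3 / 2) (by norm_num) ht hδ0 hδ1
  obtain ⟨hsum, hle⟩ := summable_and_tsum_int_le_of_unimodal
    (fun s => mul_nonneg (rpow_nonneg (hu₀ s) _) (exp_pos _).le) hM hmono hanti hint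
  simp only [u, rpow_intCast] at hsum hle hval
  refine ⟨hsum, hle.trans ?_⟩
  rw [hval, Gamma_three_halves, div_div]
  gcongr
  linarith [log_le_sub_one_of_pos hδ0]
end

section
/- (Abstract form of Theorem MW.) Let H be a real Hilbert space, v : (0, ∞) → H strongly measurable with ‖v(t)‖ ≤ C·t for all t > 0 (for some constant C ≥ 0) and ∫₀^∞ t^{−3/2} ‖v(t)‖ dt < ∞. For λ > 0 set u(λ) := λ · ∫₀^∞ e^{−λt} v(t) dt, and let g : (0, ∞) → H satisfy, for all λ, λ' > 0, the identity (λ + λ')⟨u(λ), u(λ')⟩ = ‖g(λ) − g(λ')‖² + λ‖u(λ)‖² + λ'‖u(λ')‖². Then √λ · u(λ) → 0 in norm as λ → 0⁺, and there exists w ∈ H such that g(λ) → w in norm as λ → 0⁺. -/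
/-!
Put `w t = t ^ (-3/2) ‖v t‖`, `F y = y / (1 + y)` and `Φ s = ∫ F (s t) w t dt`. The elementary
bound `y ^ (3/2) e ^ (-y) ≤ 27 (F y - F (y / 2))` gives `√s ‖u s‖ ≤ 27 (Φ s - Φ (s / 2))`, while
`Φ s → 0` as `s → 0⁺` by dominated convergence; this is the first claim. For `a ≤ b ≤ 2 a` the
identity and Cauchy–Schwarz give `‖g a - g b‖ ≤ √a ‖u a‖ + √b ‖u b‖`, so along the dyadic chain
`b, b / 2, b / 4, …` the increments of `g` telescope to at most `108 Φ b`. Hence `g` is Cauchy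
at `0⁺`, and converges because `H` is complete.
-/

open MeasureTheory RealInnerProductSpace Filter Topology Set

lemma mul_sqrt_mul_exp_neg_le {y : ℝ} (hy : 0 ≤ y) :
    y * √y * Real.exp (-y) ≤ 27 * (y / (1 + y) - y / 2 / (1 + y / 2)) := by
  have hcube : (3 + y) ^ 3 ≤ 27 * Real.exp y := by
    have h := pow_le_pow_left₀ (by positivity) (Real.add_one_le_exp (y / 3)) 3
    rw [← Real.exp_nat_mul, show ((3 : ℕ) : ℝ) * (y / 3) = y by push_cast; ring] at h
    nlinarith
  have hpoly : √y * ((1 + y) * (2 + y)) ≤ 27 * Real.exp y := calc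
    √y * ((1 + y) * (2 + y)) ≤ (1 + y) * ((1 + y) * (2 + y)) := by
      gcongr; exact (Real.sqrt_le_left (by positivity)).2 (by nlinarith)
    _ ≤ (3 + y) ^ 3 := by nlinarith
    _ ≤ 27 * Real.exp y := hcube
  have hrhs : y / (1 + y) - y / 2 / (1 + y / 2) = y / ((1 + y) * (2 + y)) := by
    field_simp; ring
  rw [hrhs, mul_div_assoc', le_div_iff₀ (by positivity), Real.exp_neg]
  calc y * √y * (Real.exp y)⁻¹ * ((1 + y) * (2 + y))
      = y * (√y * ((1 + y) * (2 + y))) / Real.exp y := by ring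
    _ ≤ y * (27 * Real.exp y) / Real.exp y := by gcongr
    _ = 27 * y := by field_simp

lemma sqrt_mul_mul_exp_neg_mul_le {s t : ℝ} (hs : 0 < s) (ht : 0 < t) :
    √s * s * Real.exp (-s * t) ≤
      27 * (s * t / (1 + s * t) - s / 2 * t / (1 + s / 2 * t)) * t ^ (-(3 : ℝ) / 2) := by
  have h := mul_sqrt_mul_exp_neg_le (mul_pos hs ht).le
  have hrpow : t ^ (-(3 : ℝ) / 2) * (t * √t) = 1 := by
    rw [Real.sqrt_eq_rpow, ← Real.rpow_one_add' ht.le (by norm_num), ← Real.rpow_add ht]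
    norm_num
  rw [Real.sqrt_mul hs.le] at h
  rw [neg_mul, show s / 2 * t = s * t / 2 by ring]
  calc √s * s * Real.exp (-(s * t))
      = s * t * (√s * √t) * Real.exp (-(s * t)) * t ^ (-(3 : ℝ) / 2) := by
        rw [← mul_one (√s * s * _), ← hrpow]; ring
    _ ≤ _ := by gcongr

noncomputable def saturationIntegral (w : ℝ → ℝ) (s : ℝ) : ℝ :=
  ∫ t in Ioi 0, s * t / (1 + s * t) * w t

namespace saturationIntegral

variable {w : ℝ → ℝ}

lemma integrableOn_integrand (hw : IntegrableOn w (Ioi 0)) {s : ℝ} (hs : 0 ≤ s) :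
    IntegrableOn (fun t => s * t / (1 + s * t) * w t) (Ioi 0) := by
  refine hw.bdd_mul (c := 1) (by fun_prop : Measurable _).aestronglyMeasurable ?_
  filter_upwards [ae_restrict_mem measurableSet_Ioi] with t (ht : 0 < t)
  rw [Real.norm_eq_abs, abs_of_nonneg (by positivity), div_le_one (by positivity)]
  linarith

lemma nonneg (hw0 : ∀ t, 0 < t → 0 ≤ w t) {s : ℝ} (hs : 0 ≤ s) :
    0 ≤ saturationIntegral w s :=
  setIntegral_nonneg measurableSet_Ioi fun t (ht : 0 < t) => by
    have := hw0 t ht; positivity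

lemma monotoneOn (hw : IntegrableOn w (Ioi 0)) (hw0 : ∀ t, 0 < t → 0 ≤ w t) :
    MonotoneOn (saturationIntegral w) (Ici 0) := by
  intro s (hs : 0 ≤ s) s' (hs' : 0 ≤ s') hss'
  refine setIntegral_mono_on (integrableOn_integrand hw hs) (integrableOn_integrand hw hs')
    measurableSet_Ioi fun t (ht : 0 < t) => mul_le_mul_of_nonneg_right ?_ (hw0 t ht)
  rw [div_le_div_iff₀ (by positivity) (by positivity)]
  nlinarith [mul_le_mul_of_nonneg_right hss' ht.le]

lemma tendsto_zero (hw : IntegrableOn w (Ioi 0)) :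
    Tendsto (saturationIntegral w) (𝓝[>] 0) (𝓝 0) := by
  have hlim := tendsto_integral_filter_of_dominated_convergence (μ := volume.restrict (Ioi 0))
    (l := 𝓝[>] (0 : ℝ)) (F := fun s t => s * t / (1 + s * t) * w t) (f := fun _ => 0)
    (fun t => ‖w t‖) ?_ ?_ hw.norm ?_
  · rwa [integral_zero] at hlim
  · filter_upwards [self_mem_nhdsWithin] with s (hs : 0 < s)
    exact (integrableOn_integrand hw hs.le).aestronglyMeasurable
  · filter_upwards [self_mem_nhdsWithin] with s (hs : 0 < s)
    filter_upwards [ae_restrict_mem measurableSet_Ioi] with t (ht : 0 < t)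
    rw [norm_mul]
    refine mul_le_of_le_one_left (norm_nonneg _) ?_
    rw [Real.norm_eq_abs, abs_of_nonneg (by positivity), div_le_one (by positivity)]
    linarith
  · refine ae_of_all _ fun t => ?_
    have hcont : ContinuousAt (fun s : ℝ => s * t / (1 + s * t) * w t) 0 :=
      ContinuousAt.mul (ContinuousAt.div (by fun_prop) (by fun_prop) (by simp)) continuousAt_const
    simpa using hcont.tendsto.mono_left nhdsWithin_le_nhds

end saturationIntegral

lemma sqrt_mul_norm_smul_integral_exp_smul_le {E : Type*} [NormedAddCommGroup E] [NormedSpace ℝ E]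
    {v : ℝ → E} (hv : IntegrableOn (fun t => t ^ (-(3 : ℝ) / 2) * ‖v t‖) (Ioi 0))
    {s : ℝ} (hs : 0 < s) :
    √s * ‖s • ∫ t in Ioi 0, Real.exp (-s * t) • v t‖ ≤
      27 * (saturationIntegral (fun t => t ^ (-(3 : ℝ) / 2) * ‖v t‖) s -
        saturationIntegral (fun t => t ^ (-(3 : ℝ) / 2) * ‖v t‖) (s / 2)) := by
  set w := fun t : ℝ => t ^ (-(3 : ℝ) / 2) * ‖v t‖
  calc √s * ‖s • ∫ t in Ioi 0, Real.exp (-s * t) • v t‖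
      = √s * s * ‖∫ t in Ioi 0, Real.exp (-s * t) • v t‖ := by
        rw [norm_smul, Real.norm_of_nonneg hs.le, mul_assoc]
    _ ≤ √s * s * ∫ t in Ioi 0, ‖Real.exp (-s * t) • v t‖ := by
        gcongr; exact norm_integral_le_integral_norm _
    _ = ∫ t in Ioi 0, √s * s * Real.exp (-s * t) * ‖v t‖ := by
        rw [← integral_const_mul]
        simp only [norm_smul, Real.norm_of_nonneg (Real.exp_pos _).le, mul_assoc]
    _ ≤ ∫ t in Ioi 0, 27 * (s * t / (1 + s * t) * w t - s / 2 * t / (1 + s / 2 * t) * w t) := by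
        refine integral_mono_of_nonneg (ae_of_all _ fun t => by positivity)
          (((saturationIntegral.integrableOn_integrand hv hs.le).sub
            (saturationIntegral.integrableOn_integrand hv (by positivity))).const_mul 27) ?_
        filter_upwards [ae_restrict_mem measurableSet_Ioi] with t (ht : 0 < t)
        calc √s * s * Real.exp (-s * t) * ‖v t‖
            ≤ 27 * (s * t / (1 + s * t) - s / 2 * t / (1 + s / 2 * t)) * t ^ (-(3 : ℝ) / 2)
              * ‖v t‖ :=
              mul_le_mul_of_nonneg_right (sqrt_mul_mul_exp_neg_mul_le hs ht) (norm_nonneg _)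
          _ = _ := by simp only [w]; ring
    _ = 27 * (saturationIntegral w s - saturationIntegral w (s / 2)) := by
        rw [integral_const_mul, integral_sub (saturationIntegral.integrableOn_integrand hv hs.le)
          (saturationIntegral.integrableOn_integrand hv (by positivity))]
        rfl

lemma norm_sub_le_of_inner_eq {H : Type*} [NormedAddCommGroup H] [InnerProductSpace ℝ H]
    {a b : ℝ} {ua ub ga gb : H} (ha : 0 < a) (hab : a ≤ b) (hba : b ≤ 2 * a)
    (h : (a + b) * ⟪ua, ub⟫ = ‖ga - gb‖ ^ 2 + a * ‖ua‖ ^ 2 + b * ‖ub‖ ^ 2) :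
    ‖ga - gb‖ ≤ √a * ‖ua‖ + √b * ‖ub‖ := by
  have hsa : √a ^ 2 = a := Real.sq_sqrt ha.le
  have hsb : √b ^ 2 = b := Real.sq_sqrt (ha.le.trans hab)
  have hsab : √a ≤ √b := Real.sqrt_le_sqrt hab
  -- `a + b ≤ 3 √a √b`, and AM-GM absorbs the cross term `(a + b) ‖ua‖ ‖ub‖`
  have hsum : a + b ≤ 3 * (√a * √b) := by nlinarith [Real.sqrt_nonneg a]
  have hAB := mul_nonneg (norm_nonneg ua) (norm_nonneg ub)
  have hinner := real_inner_le_norm ua ub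
  refine (pow_le_pow_iff_left₀ (norm_nonneg _) (by positivity) two_ne_zero).1 ?_
  nlinarith [sq_nonneg (√a * ‖ua‖ - √b * ‖ub‖), mul_le_mul_of_nonneg_right hsum hAB,
    mul_le_mul_of_nonneg_right hinner (by linarith : 0 ≤ a + b)]

lemma dist_le_of_dyadic_step {E : Type*} [PseudoMetricSpace E] {g : ℝ → E} {Ψ : ℝ → ℝ}
    (hmono : MonotoneOn Ψ (Ioi 0)) (hnonneg : ∀ s, 0 < s → 0 ≤ Ψ s)
    (hstep : ∀ a b, 0 < a → a ≤ b → b ≤ 2 * a → dist (g a) (g b) ≤ Ψ b - Ψ (a / 2))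
    {a b : ℝ} (ha : 0 < a) (hab : a ≤ b) :
    dist (g a) (g b) ≤ 2 * Ψ b := by
  have hΨ : ∀ {s s'}, 0 < s → s ≤ s' → Ψ s ≤ Ψ s' := fun hs hss' =>
    hmono (mem_Ioi.2 hs) (mem_Ioi.2 (hs.trans_le hss')) hss'
  -- chaining `b, b / 2, b / 4, …` down to `a`, the step bounds telescope
  have hchain : ∀ k : ℕ, ∀ b, a ≤ b → b ≤ 2 ^ k * a →
      dist (g a) (g b) ≤ Ψ b + Ψ (b / 2) - Ψ (a / 2) - Ψ (a / 4) := by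
    intro k
    induction k with
    | zero =>
      intro b hab hb
      obtain rfl : b = a := le_antisymm (by simpa using hb) hab
      simp only [dist_self]
      linarith [hΨ (by linarith : 0 < b / 4) (by linarith : b / 4 ≤ b)]
    | succ k ih =>
      intro b hab hb
      by_cases hb2 : b ≤ 2 * a
      · linarith [hstep a b ha hab hb2,
          hΨ (by linarith : 0 < a / 4) (by linarith : a / 4 ≤ b / 2)]
      · have hhalf := ih (b / 2) (by linarith) (by rw [pow_succ] at hb; linarith)
        have hlast := hstep (b / 2) b (by linarith) (by linarith) (by linarith)
        rw [div_div, show (2 : ℝ) * 2 = 4 by norm_num] at hhalf hlast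
        linarith [dist_triangle (g a) (g (b / 2)) (g b)]
  obtain ⟨k, hk⟩ := pow_unbounded_of_one_lt (b / a) one_lt_two
  have := hchain k b hab (by rw [div_lt_iff₀ ha] at hk; linarith)
  linarith [hΨ (by linarith : 0 < b / 2) (by linarith : b / 2 ≤ b),
    hnonneg (a / 2) (by linarith), hnonneg (a / 4) (by linarith)]

lemma exists_tendsto_nhdsGT_zero_of_dist_le {E : Type*} [PseudoMetricSpace E] [CompleteSpace E]
    {g : ℝ → E} {B : ℝ → ℝ} (hB : Tendsto B (𝓝[>] 0) (𝓝 0))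
    (hg : ∀ a b, 0 < a → a ≤ b → dist (g a) (g b) ≤ B b) :
    ∃ w, Tendsto g (𝓝[>] 0) (𝓝 w) := by
  refine CompleteSpace.complete (Metric.cauchy_iff.2 ⟨inferInstance, fun ε hε => ?_⟩)
  obtain ⟨b, hBb, hb⟩ :=
    ((hB.eventually (gt_mem_nhds (half_pos hε))).and self_mem_nhdsWithin).exists
  refine ⟨g '' Ioc 0 b, image_mem_map (Ioc_mem_nhdsGT hb), ?_⟩
  rintro _ ⟨x, ⟨hx, hxb⟩, rfl⟩ _ ⟨y, ⟨hy, hyb⟩, rfl⟩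
  calc dist (g x) (g y) ≤ dist (g x) (g b) + dist (g y) (g b) := dist_triangle_right _ _ _
    _ ≤ B b + B b := add_le_add (hg x b hx hxb) (hg y b hy hyb)
    _ < ε := by linarith

theorem stmt_15_general
    {H : Type*} [NormedAddCommGroup H] [InnerProductSpace ℝ H] [CompleteSpace H]
    (v : ℝ → H)
    (hint : IntegrableOn (fun t : ℝ => t ^ (-(3 : ℝ) / 2) * ‖v t‖) (Set.Ioi 0))
    (u g : ℝ → H)
    (hu : ∀ l : ℝ, 0 < l → u l = l • ∫ t in Set.Ioi (0 : ℝ), Real.exp (-l * t) • v t)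
    (hid : ∀ l l' : ℝ, 0 < l → 0 < l' →
      (l + l') * ⟪u l, u l'⟫ =
        ‖g l - g l'‖ ^ 2 + l * ‖u l‖ ^ 2 + l' * ‖u l'‖ ^ 2) :
    Filter.Tendsto (fun l : ℝ => Real.sqrt l • u l)
      (nhdsWithin 0 (Set.Ioi 0)) (nhds 0) ∧
    ∃ w : H, Filter.Tendsto g (nhdsWithin 0 (Set.Ioi 0)) (nhds w) := by
  set Φ := saturationIntegral fun t : ℝ => t ^ (-(3 : ℝ) / 2) * ‖v t‖
  have hw0 : ∀ t : ℝ, 0 < t → 0 ≤ t ^ (-(3 : ℝ) / 2) * ‖v t‖ := fun t _ => by positivity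
  have hΦ0 : ∀ s, 0 < s → 0 ≤ Φ s := fun s hs => saturationIntegral.nonneg hw0 hs.le
  have hΦmono : MonotoneOn Φ (Ioi 0) :=
    (saturationIntegral.monotoneOn hint hw0).mono Ioi_subset_Ici_self
  have hΦlim : Tendsto Φ (𝓝[>] 0) (𝓝 0) := saturationIntegral.tendsto_zero hint
  have hu_le : ∀ s, 0 < s → √s * ‖u s‖ ≤ 27 * (Φ s - Φ (s / 2)) := fun s hs => by
    rw [hu s hs]; exact sqrt_mul_norm_smul_integral_exp_smul_le hint hs
  refine ⟨squeeze_zero_norm' ?_ (by simpa using hΦlim.const_mul 27), ?_⟩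
  · filter_upwards [self_mem_nhdsWithin] with s (hs : 0 < s)
    rw [norm_smul, Real.norm_of_nonneg (Real.sqrt_nonneg s)]
    linarith [hu_le s hs, hΦ0 (s / 2) (half_pos hs)]
  refine exists_tendsto_nhdsGT_zero_of_dist_le (B := fun b => 2 * (54 * Φ b))
    (by simpa using (hΦlim.const_mul 54).const_mul 2) fun a b ha hab => ?_
  refine dist_le_of_dyadic_step (g := g) (Ψ := fun s => 54 * Φ s)
    (fun s hs s' hs' h => by linarith [hΦmono hs hs' h]) (fun s hs => by linarith [hΦ0 s hs])
    (fun a b ha hab hba => ?_) ha hab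
  have hb : 0 < b := ha.trans_le hab
  rw [dist_eq_norm]
  refine (norm_sub_le_of_inner_eq ha hab hba (hid a b ha hb)).trans ?_
  linarith [hu_le a ha, hu_le b hb, hΦmono (mem_Ioi.2 ha) (mem_Ioi.2 hb) hab,
    hΦmono (mem_Ioi.2 (half_pos ha)) (mem_Ioi.2 (half_pos hb)) (by linarith : a / 2 ≤ b / 2)]

theorem stmt_15
    {H : Type*} [NormedAddCommGroup H] [InnerProductSpace ℝ H] [CompleteSpace H]
    (C : ℝ) (hC : 0 ≤ C) (v : ℝ → H)
    (hmeas : AEStronglyMeasurable v (volume.restrict (Set.Ioi (0 : ℝ))))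
    (hbdd : ∀ t : ℝ, 0 < t → ‖v t‖ ≤ C * t)
    (hint : IntegrableOn (fun t : ℝ => t ^ (-(3 : ℝ) / 2) * ‖v t‖) (Set.Ioi 0))
    (u g : ℝ → H)
    (hu : ∀ l : ℝ, 0 < l → u l = l • ∫ t in Set.Ioi (0 : ℝ), Real.exp (-l * t) • v t)
    (hid : ∀ l l' : ℝ, 0 < l → 0 < l' →
      (l + l') * ⟪u l, u l'⟫ =
        ‖g l - g l'‖ ^ 2 + l * ‖u l‖ ^ 2 + l' * ‖u l'‖ ^ 2) :
    Filter.Tendsto (fun l : ℝ => Real.sqrt l • u l)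
      (nhdsWithin 0 (Set.Ioi 0)) (nhds 0) ∧
    ∃ w : H, Filter.Tendsto g (nhdsWithin 0 (Set.Ioi 0)) (nhds w) :=
  stmt_15_general v hint u g hu hid
end
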